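/- Let u : ℝⁿ × [0,T) → ℝ be a smooth solution of the heat equation and A = D²u its spatial Hessian. Then σ₂(A) = ((Δu)² − |D²u|²)/2 satisfies (∂ₜ − Δ)σ₂(A) = −|∇σ₁(A)|² + ∑ᵢ trace(∂ᵢA · ∂ᵢA), where σ₁(A) = Δu and ∂ᵢA is the matrix of third derivatives (∂ᵢu_{jk})_{jk}. -/

import Mathlib

open scoped BigOperators
open Set

/-- i-th spatial partial derivative. -/
noncomputable def pd {n : ℕ} (i : Fin n) (f : (Fin n → ℝ) → ℝ) : (Fin n → ℝ) → ℝ :=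
  fun x => fderiv ℝ f x (Pi.single i 1)

/-- Spatial Laplacian. -/
noncomputable def lap {n : ℕ} (f : (Fin n → ℝ) → ℝ) : (Fin n → ℝ) → ℝ :=
  fun x => ∑ i, pd i (pd i f) x

/-- Hessian entry (j,k) of u(·,t). -/
noncomputable def hess {n : ℕ} (u : (Fin n → ℝ) → ℝ → ℝ) (j k : Fin n) :
    (Fin n → ℝ) → ℝ → ℝ :=
  fun x t => pd j (pd k (fun y => u y t)) x

/-- σ₂ of the spatial Hessian: ((Δu)² − trace((D²u)²))/2. -/
noncomputable def sigma2 {n : ℕ} (u : (Fin n → ℝ) → ℝ → ℝ) : (Fin n → ℝ) → ℝ → ℝ :=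
  fun x t => ((lap (fun y => u y t) x) ^ 2
    - ∑ j, ∑ k, hess u j k x t * hess u k j x t) / 2

noncomputable def Dd {E : Type*} [NormedAddCommGroup E] [NormedSpace ℝ E]
    (v : E) (f : E → ℝ) : E → ℝ := fun p => fderiv ℝ f p v

section basic
variable {E : Type*} [NormedAddCommGroup E] [NormedSpace ℝ E]

lemma Dd_smooth {f : E → ℝ} (hf : ContDiff ℝ (⊤ : ℕ∞) f) (v : E) : ContDiff ℝ (⊤ : ℕ∞) (Dd v f) :=
  (hf.fderiv_right (by simp)).clm_apply contDiff_const

lemma Dd_apply_eq {f : E → ℝ} (hf : ContDiff ℝ (⊤ : ℕ∞) f) (v w : E) (x : E) :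
    Dd v (Dd w f) x = fderiv ℝ (fderiv ℝ f) x v w := by
  have h1 : DifferentiableAt ℝ (fderiv ℝ f) x :=
    ((hf.fderiv_right (m := (⊤ : ℕ∞)) (by simp)).differentiable (by simp)) x
  have : Dd w f = fun p => (fderiv ℝ f p) w := rfl
  rw [Dd, this, fderiv_clm_apply h1 (differentiableAt_const w)]
  simp

lemma Dd_comm {f : E → ℝ} (hf : ContDiff ℝ (⊤ : ℕ∞) f) (v w : E) :
    Dd v (Dd w f) = Dd w (Dd v f) := by
  funext x
  rw [Dd_apply_eq hf v w x, Dd_apply_eq hf w v x]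
  exact second_derivative_symmetric
    (fun y => ((hf.differentiable (by simp)) y).hasFDerivAt)
    (((hf.fderiv_right (m := (⊤ : ℕ∞)) (by simp)).differentiable (by simp)) x).hasFDerivAt v w

lemma Dd_mul {f g : E → ℝ} (hf : Differentiable ℝ f) (hg : Differentiable ℝ g)
    (v : E) (x : E) :
    Dd v (fun p => f p * g p) x = Dd v f x * g x + f x * Dd v g x := by
  simp only [Dd, fderiv_fun_mul (hf x) (hg x)]
  simp [mul_comm]
  ring

lemma Dd_add {f g : E → ℝ} (hf : Differentiable ℝ f) (hg : Differentiable ℝ g)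
    (v : E) (x : E) :
    Dd v (fun p => f p + g p) x = Dd v f x + Dd v g x := by
  simp only [Dd, fderiv_fun_add (hf x) (hg x)]; simp

lemma Dd_sum {ι : Type*} (s : Finset ι) {f : ι → E → ℝ}
    (hf : ∀ i, Differentiable ℝ (f i)) (v : E) (x : E) :
    Dd v (fun p => ∑ i ∈ s, f i p) x = ∑ i ∈ s, Dd v (f i) x := by
  simp only [Dd]
  rw [fderiv_fun_sum (fun i _ => hf i x)]
  simp

lemma Dd_sub {f g : E → ℝ} (hf : Differentiable ℝ f) (hg : Differentiable ℝ g)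
    (v : E) (x : E) :
    Dd v (fun p => f p - g p) x = Dd v f x - Dd v g x := by
  simp only [Dd, fderiv_fun_sub (hf x) (hg x)]; simp

lemma Dd_div_const {f : E → ℝ} (hf : Differentiable ℝ f) (c : ℝ) (v : E) (x : E) :
    Dd v (fun p => f p / c) x = Dd v f x / c := by
  simp only [div_eq_mul_inv, Dd, fderiv_mul_const (hf x)]
  simp [mul_comm]

lemma Dd_sq {f : E → ℝ} (hf : Differentiable ℝ f) (v : E) (x : E) :
    Dd v (fun p => (f p) ^ 2) x = 2 * f x * Dd v f x := by
  have h : (fun p => (f p)^2) = fun p => f p * f p := by funext p; ring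

  rw [h, Dd_mul hf hf]; ring

lemma Dd_const_mul {f : E → ℝ} (hf : Differentiable ℝ f) (c : ℝ) (v : E) (x : E) :
    Dd v (fun p => c * f p) x = c * Dd v f x := by
  simp only [Dd, fderiv_const_mul (hf x)]; simp

end basic

section matrixfns
variable {n : ℕ} {U : (Fin n → ℝ) × ℝ → ℝ}

def eV (n : ℕ) (i : Fin n) : (Fin n → ℝ) × ℝ := (Pi.single i 1, 0)
def tV (n : ℕ) : (Fin n → ℝ) × ℝ := (0, 1)

noncomputable def Hm (U : (Fin n → ℝ) × ℝ → ℝ) (j k : Fin n) : (Fin n → ℝ) × ℝ → ℝ :=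
  Dd (eV n j) (Dd (eV n k) U)

noncomputable def Gm (U : (Fin n → ℝ) × ℝ → ℝ) : (Fin n → ℝ) × ℝ → ℝ :=
  fun p => ∑ j, Hm U j j p

noncomputable def Fm (U : (Fin n → ℝ) × ℝ → ℝ) : (Fin n → ℝ) × ℝ → ℝ :=
  fun p => ((Gm U p) ^ 2 - ∑ j, ∑ k, Hm U j k p * Hm U k j p) / 2

variable (hU : ContDiff ℝ (⊤ : ℕ∞) U)
include hU

lemma Hm_smooth (j k : Fin n) : ContDiff ℝ (⊤ : ℕ∞) (Hm U j k) :=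
  Dd_smooth (Dd_smooth hU _) _

lemma Gm_smooth : ContDiff ℝ (⊤ : ℕ∞) (Gm U) :=
  ContDiff.sum (fun j _ => Hm_smooth hU j j)

lemma Fm_smooth : ContDiff ℝ (⊤ : ℕ∞) (Fm U) := by
  apply ContDiff.div_const
  exact ((Gm_smooth hU).pow 2).sub
    (ContDiff.sum fun j _ => ContDiff.sum fun k _ => (Hm_smooth hU j k).mul (Hm_smooth hU k j))

lemma DG (v : (Fin n → ℝ) × ℝ) :
    Dd v (Gm U) = fun p => ∑ j, Dd v (Hm U j j) p := by
  funext x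
  exact Dd_sum _ (fun j => (Hm_smooth hU j j).differentiable (by simp)) v x

lemma DF (v : (Fin n → ℝ) × ℝ) :
    Dd v (Fm U) = fun p =>
      (2 * (Gm U p * Dd v (Gm U) p)
        - ∑ j, ∑ k, (Dd v (Hm U j k) p * Hm U k j p + Hm U j k p * Dd v (Hm U k j) p)) / 2 := by
  have dH : ∀ j k, Differentiable ℝ (Hm U j k) :=
    fun j k => (Hm_smooth hU j k).differentiable (by simp)
  have dG : Differentiable ℝ (Gm U) := (Gm_smooth hU).differentiable (by simp)
  have dS : ∀ j, Differentiable ℝ (fun p => ∑ k, Hm U j k p * Hm U k j p) :=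
    fun j => Differentiable.fun_sum (fun k _ => (dH j k).mul (dH k j))
  funext x
  rw [show Fm U = fun p => ((Gm U p) ^ 2 - ∑ j, ∑ k, Hm U j k p * Hm U k j p) / 2 from rfl]
  rw [Dd_div_const (((dG.fun_pow 2)).fun_sub (Differentiable.fun_sum fun j _ => dS j))]
  rw [Dd_sub (dG.fun_pow 2) (Differentiable.fun_sum fun j _ => dS j)]
  rw [Dd_sq dG]
  rw [Dd_sum _ dS]
  have : ∀ j, Dd v (fun p => ∑ k, Hm U j k p * Hm U k j p) x
      = ∑ k, (Dd v (Hm U j k) x * Hm U k j x + Hm U j k x * Dd v (Hm U k j) x) := by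
    intro j
    rw [Dd_sum _ (fun k => (dH j k).fun_mul (dH k j))]
    exact Finset.sum_congr rfl fun k _ => Dd_mul (dH j k) (dH k j) v x
  rw [Finset.sum_congr rfl fun j _ => this j]
  ring

end matrixfns

section matrixfns2
variable {n : ℕ} {U : (Fin n → ℝ) × ℝ → ℝ} (hU : ContDiff ℝ (⊤ : ℕ∞) U)
include hU

lemma D2F (v w : (Fin n → ℝ) × ℝ) (x : (Fin n → ℝ) × ℝ) :
    Dd w (Dd v (Fm U)) x =
      (2 * (Dd w (Gm U) x * Dd v (Gm U) x + Gm U x * Dd w (Dd v (Gm U)) x)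
        - ∑ j, ∑ k,
          (Dd w (Dd v (Hm U j k)) x * Hm U k j x + Dd v (Hm U j k) x * Dd w (Hm U k j) x
            + (Dd w (Hm U j k) x * Dd v (Hm U k j) x + Hm U j k x * Dd w (Dd v (Hm U k j)) x))) / 2 := by
  have dH : ∀ j k, Differentiable ℝ (Hm U j k) :=
    fun j k => (Hm_smooth hU j k).differentiable (by simp)
  have dDH : ∀ j k, Differentiable ℝ (Dd v (Hm U j k)) :=
    fun j k => (Dd_smooth (Hm_smooth hU j k) v).differentiable (by simp)
  have dG : Differentiable ℝ (Gm U) := (Gm_smooth hU).differentiable (by simp)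
  have dDG : Differentiable ℝ (Dd v (Gm U)) :=
    (Dd_smooth (Gm_smooth hU) v).differentiable (by simp)
  have dT : ∀ j k, Differentiable ℝ
      (fun p => Dd v (Hm U j k) p * Hm U k j p + Hm U j k p * Dd v (Hm U k j) p) :=
    fun j k => ((dDH j k).mul (dH k j)).add ((dH j k).mul (dDH k j))
  have dS : ∀ j, Differentiable ℝ (fun p =>
      ∑ k, (Dd v (Hm U j k) p * Hm U k j p + Hm U j k p * Dd v (Hm U k j) p)) :=
    fun j => Differentiable.fun_sum (fun k _ => dT j k)
  rw [DF hU v]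
  rw [Dd_div_const ((differentiable_const 2 |>.fun_mul (dG.fun_mul dDG)).fun_sub
    (Differentiable.fun_sum fun j _ => dS j))]
  rw [Dd_sub (by exact (differentiable_const 2 |>.fun_mul (dG.fun_mul dDG)))
    (Differentiable.fun_sum fun j _ => dS j)]
  rw [Dd_const_mul (dG.fun_mul dDG)]
  rw [Dd_mul dG dDG]
  rw [Dd_sum _ dS]
  have h1 : ∀ j, Dd w (fun p =>
      ∑ k, (Dd v (Hm U j k) p * Hm U k j p + Hm U j k p * Dd v (Hm U k j) p)) x
      = ∑ k, (Dd w (Dd v (Hm U j k)) x * Hm U k j x + Dd v (Hm U j k) x * Dd w (Hm U k j) x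
          + (Dd w (Hm U j k) x * Dd v (Hm U k j) x + Hm U j k x * Dd w (Dd v (Hm U k j)) x)) := by
    intro j
    rw [Dd_sum _ (fun k => dT j k)]
    refine Finset.sum_congr rfl fun k _ => ?_
    rw [Dd_add ((dDH j k).fun_mul (dH k j)) ((dH j k).fun_mul (dDH k j)),
      Dd_mul (dDH j k) (dH k j), Dd_mul (dH j k) (dDH k j)]
  rw [Finset.sum_congr rfl fun j _ => h1 j]

lemma comm4 (i j k : Fin n) :
    Dd (eV n i) (Dd (eV n i) (Hm U j k)) = Dd (eV n j) (Dd (eV n k) (Hm U i i)) := by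
  show Dd (eV n i) (Dd (eV n i) (Dd (eV n j) (Dd (eV n k) U)))
    = Dd (eV n j) (Dd (eV n k) (Dd (eV n i) (Dd (eV n i) U)))
  calc Dd (eV n i) (Dd (eV n i) (Dd (eV n j) (Dd (eV n k) U)))
      = Dd (eV n i) (Dd (eV n j) (Dd (eV n i) (Dd (eV n k) U))) := by
        rw [Dd_comm (Dd_smooth hU (eV n k)) (eV n i) (eV n j)]
    _ = Dd (eV n j) (Dd (eV n i) (Dd (eV n i) (Dd (eV n k) U))) := by
        rw [Dd_comm (Dd_smooth (Dd_smooth hU (eV n k)) (eV n i)) (eV n i) (eV n j)]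
    _ = Dd (eV n j) (Dd (eV n i) (Dd (eV n k) (Dd (eV n i) U))) := by
        rw [Dd_comm hU (eV n i) (eV n k)]
    _ = Dd (eV n j) (Dd (eV n k) (Dd (eV n i) (Dd (eV n i) U))) := by
        rw [Dd_comm (Dd_smooth hU (eV n i)) (eV n i) (eV n k)]

lemma commT (j k : Fin n) :
    Dd (tV n) (Hm U j k) = Dd (eV n j) (Dd (eV n k) (Dd (tV n) U)) := by
  show Dd (tV n) (Dd (eV n j) (Dd (eV n k) U)) = _
  calc Dd (tV n) (Dd (eV n j) (Dd (eV n k) U))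
      = Dd (eV n j) (Dd (tV n) (Dd (eV n k) U)) := by
        rw [Dd_comm (Dd_smooth hU (eV n k)) (tV n) (eV n j)]
    _ = Dd (eV n j) (Dd (eV n k) (Dd (tV n) U)) := by
        rw [Dd_comm hU (tV n) (eV n k)]

lemma lapH (j k : Fin n) (x : (Fin n → ℝ) × ℝ) :
    ∑ i, Dd (eV n i) (Dd (eV n i) (Hm U j k)) x
      = Dd (eV n j) (Dd (eV n k) (Gm U)) x := by
  have h1 : Dd (eV n k) (Gm U) = fun p => ∑ i, Dd (eV n k) (Hm U i i) p := DG hU _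
  rw [h1, Dd_sum _ (fun i => (Dd_smooth (Hm_smooth hU i i) _).differentiable (by simp))]
  refine Finset.sum_congr rfl fun i _ => ?_
  rw [comm4 hU i j k]

end matrixfns2

section slice
variable {n : ℕ}

lemma pd_slice {f : (Fin n → ℝ) × ℝ → ℝ} (hf : ContDiff ℝ (⊤ : ℕ∞) f) (i : Fin n) (t : ℝ)
    (x : Fin n → ℝ) :
    pd i (fun y => f (y, t)) x = Dd (eV n i) f (x, t) := by
  have hL : HasFDerivAt (fun y : Fin n → ℝ => (y, t))
      (ContinuousLinearMap.inl ℝ (Fin n → ℝ) ℝ) x :=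
    (hasFDerivAt_id x).prodMk (hasFDerivAt_const t x)
  have hfd : HasFDerivAt f (fderiv ℝ f (x, t)) (x, t) :=
    ((hf.differentiable (by simp)) (x, t)).hasFDerivAt
  have hc := hfd.comp x hL
  rw [show (fun y => f (y, t)) = f ∘ (fun y => (y, t)) from rfl, pd, hc.fderiv]
  rfl

lemma pd_slice_fun {f : (Fin n → ℝ) × ℝ → ℝ} (hf : ContDiff ℝ (⊤ : ℕ∞) f) (i : Fin n) (t : ℝ) :
    pd i (fun y => f (y, t)) = fun x => Dd (eV n i) f (x, t) :=
  funext (pd_slice hf i t)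

lemma pd2_slice {f : (Fin n → ℝ) × ℝ → ℝ} (hf : ContDiff ℝ (⊤ : ℕ∞) f) (j k : Fin n) (t : ℝ)
    (x : Fin n → ℝ) :
    pd j (pd k (fun y => f (y, t))) x = Dd (eV n j) (Dd (eV n k) f) (x, t) := by
  rw [pd_slice_fun hf k t, pd_slice (Dd_smooth hf _) j t x]

lemma deriv_slice {f : (Fin n → ℝ) × ℝ → ℝ} (hf : ContDiff ℝ (⊤ : ℕ∞) f) (x : Fin n → ℝ)
    (t : ℝ) :
    deriv (fun s => f (x, s)) t = Dd (tV n) f (x, t) := by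
  have hM : HasFDerivAt (fun s : ℝ => (x, s))
      (ContinuousLinearMap.inr ℝ (Fin n → ℝ) ℝ) t :=
    (hasFDerivAt_const x t).prodMk (hasFDerivAt_id t)
  have hfd : HasFDerivAt f (fderiv ℝ f (x, t)) (x, t) :=
    ((hf.differentiable (by simp)) (x, t)).hasFDerivAt
  have hc := (hfd.comp t hM).hasDerivAt
  rw [show (fun s => f (x, s)) = f ∘ (fun s => (x, s)) from rfl, hc.deriv]
  rfl

lemma lap_slice {f : (Fin n → ℝ) × ℝ → ℝ} (hf : ContDiff ℝ (⊤ : ℕ∞) f) (t : ℝ)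
    (x : Fin n → ℝ) :
    lap (fun y => f (y, t)) x = ∑ i, Dd (eV n i) (Dd (eV n i) f) (x, t) := by
  rw [lap]
  exact Finset.sum_congr rfl fun i _ => pd2_slice hf i i t x

end slice

lemma alg {n : ℕ} (Gq : ℝ) (g XX : Fin n → ℝ) (h Y : Fin n → Fin n → ℝ)
    (P Q : Fin n → Fin n → Fin n → ℝ) (hQ : ∀ j k, ∑ i, Q i j k = Y j k) :
    (2 * (Gq * ∑ i, XX i) - ∑ j, ∑ k, (Y j k * h k j + h j k * Y k j)) / 2
    - ∑ i, ((2 * (g i * g i + Gq * XX i)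
        - ∑ j, ∑ k, (Q i j k * h k j + P i j k * P i k j
          + (P i j k * P i k j + h j k * Q i k j))) / 2)
    = -(∑ i, (g i) ^ 2) + ∑ i, ∑ j, ∑ k, P i j k * P i k j := by
  have h2 : ∑ i : Fin n, ∑ j, ∑ k, Q i j k * h k j = ∑ j, ∑ k, Y j k * h k j := by
    rw [Finset.sum_comm]
    refine Finset.sum_congr rfl fun j _ => ?_
    rw [Finset.sum_comm]
    exact Finset.sum_congr rfl fun k _ => by rw [← Finset.sum_mul, hQ j k]
  have h3 : ∑ i : Fin n, ∑ j, ∑ k, h j k * Q i k j = ∑ j, ∑ k, h j k * Y k j := by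
    rw [Finset.sum_comm]
    refine Finset.sum_congr rfl fun j _ => ?_
    rw [Finset.sum_comm]
    exact Finset.sum_congr rfl fun k _ => by rw [← Finset.mul_sum, hQ k j]
  rw [← Finset.sum_div, ← sub_div, div_eq_iff (two_ne_zero)]
  simp only [pow_two, mul_add, Finset.sum_add_distrib, Finset.sum_sub_distrib,
    ← Finset.mul_sum]
  rw [h2, h3]
  ring

/-- Evolution of σ₂ of the Hessian under the heat equation:
(∂ₜ − Δ)σ₂(A) = −|∇σ₁(A)|² + ∑ᵢ trace(∂ᵢA·∂ᵢA). -/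
theorem sigma2_evolution (n : ℕ) (T : ℝ) (u : (Fin n → ℝ) → ℝ → ℝ)
    (hu : ContDiff ℝ (⊤ : ℕ∞) (fun p : (Fin n → ℝ) × ℝ => u p.1 p.2))
    (hheat : ∀ x, ∀ t ∈ Ico (0 : ℝ) T,
      deriv (fun s => u x s) t = lap (fun y => u y t) x)
    (x : Fin n → ℝ) (t : ℝ) (ht : t ∈ Ico (0 : ℝ) T) :
    deriv (fun s => sigma2 u x s) t - lap (fun y => sigma2 u y t) x
      = -(∑ i, (pd i (fun y => lap (fun z => u z t) y) x) ^ 2)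
        + ∑ i, ∑ j, ∑ k,
            pd i (fun y => hess u j k y t) x * pd i (fun y => hess u k j y t) x := by
  set U : (Fin n → ℝ) × ℝ → ℝ := fun p => u p.1 p.2 with hUdef
  have hU : ContDiff ℝ (⊤ : ℕ∞) U := hu
  have dH : ∀ j k, Differentiable ℝ (Hm U j k) :=
    fun j k => (Hm_smooth hU j k).differentiable (by simp)
  -- translations
  have hlap : ∀ (t' : ℝ) (x' : Fin n → ℝ), lap (fun y => u y t') x' = Gm U (x', t') := by
    intro t' x'
    have : (fun y => u y t') = fun y => U (y, t') := rfl
    rw [this, lap_slice hU t' x']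
    rfl
  have hhess : ∀ (j k : Fin n) (t' : ℝ) (x' : Fin n → ℝ),
      hess u j k x' t' = Hm U j k (x', t') := by
    intro j k t' x'
    have : (fun y => u y t') = fun y => U (y, t') := rfl
    rw [hess, this, pd2_slice hU j k t' x']
    rfl
  have hsig : ∀ (t' : ℝ) (x' : Fin n → ℝ), sigma2 u x' t' = Fm U (x', t') := by
    intro t' x'
    rw [sigma2, hlap t' x']
    rw [Finset.sum_congr rfl fun j _ => Finset.sum_congr rfl fun k _ => by
      rw [hhess j k t' x', hhess k j t' x']]
    rfl
  -- heat equation in Dd-form at time t, all spatial points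
  have hDtU : ∀ y, Dd (tV n) U (y, t) = Gm U (y, t) := by
    intro y
    rw [← deriv_slice hU y t]
    have : (fun s => U (y, s)) = fun s => u y s := rfl
    rw [this, hheat y t ht, hlap t y]
  -- commuted heat equation: time derivative of Hessian entries at time t
  have hτH : ∀ (j k : Fin n) (x' : Fin n → ℝ),
      Dd (tV n) (Hm U j k) (x', t) = Dd (eV n j) (Dd (eV n k) (Gm U)) (x', t) := by
    intro j k x'
    rw [commT hU j k]
    have hin : ∀ y, Dd (eV n k) (Dd (tV n) U) (y, t) = Dd (eV n k) (Gm U) (y, t) := by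
      intro y
      rw [← pd_slice (Dd_smooth hU (tV n)) k t y, ← pd_slice (Gm_smooth hU) k t y]
      congr 1
      funext z
      exact hDtU z
    rw [← pd_slice (Dd_smooth (Dd_smooth hU (tV n)) (eV n k)) j t x',
      ← pd_slice (Dd_smooth (Gm_smooth hU) (eV n k)) j t x']
    congr 1
    funext y
    exact hin y
  -- rewrite LHS pieces
  have hL1 : deriv (fun s => sigma2 u x s) t = Dd (tV n) (Fm U) (x, t) := by
    have : (fun s => sigma2 u x s) = fun s => Fm U (x, s) := funext fun s => hsig s x
    rw [this, deriv_slice (Fm_smooth hU) x t]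
  have hL2 : lap (fun y => sigma2 u y t) x
      = ∑ i, Dd (eV n i) (Dd (eV n i) (Fm U)) (x, t) := by
    have : (fun y => sigma2 u y t) = fun y => Fm U (y, t) := funext fun y => hsig t y
    rw [this, lap_slice (Fm_smooth hU) t x]
  -- rewrite RHS pieces
  have hR1 : ∀ i : Fin n, pd i (fun y => lap (fun z => u z t) y) x
      = Dd (eV n i) (Gm U) (x, t) := by
    intro i
    have : (fun y => lap (fun z => u z t) y) = fun y => Gm U (y, t) :=
      funext fun y => hlap t y
    rw [this, pd_slice (Gm_smooth hU) i t x]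
  have hR2 : ∀ (i j k : Fin n), pd i (fun y => hess u j k y t) x
      = Dd (eV n i) (Hm U j k) (x, t) := by
    intro i j k
    have : (fun y => hess u j k y t) = fun y => Hm U j k (y, t) :=
      funext fun y => hhess j k t y
    rw [this, pd_slice (Hm_smooth hU j k) i t x]
  have eR1 : ∑ i, (pd i (fun y => lap (fun z => u z t) y) x) ^ 2
      = ∑ i, (Dd (eV n i) (Gm U) (x, t)) ^ 2 :=
    Finset.sum_congr rfl fun i _ => by rw [hR1 i]
  have eR2 : (∑ i, ∑ j, ∑ k,
        pd i (fun y => hess u j k y t) x * pd i (fun y => hess u k j y t) x)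
      = ∑ i, ∑ j, ∑ k, Dd (eV n i) (Hm U j k) (x, t) * Dd (eV n i) (Hm U k j) (x, t) :=
    Finset.sum_congr rfl fun i _ => Finset.sum_congr rfl fun j _ =>
      Finset.sum_congr rfl fun k _ => by rw [hR2 i j k, hR2 i k j]
  have eτF : Dd (tV n) (Fm U) (x, t) =
      (2 * (Gm U (x, t) * ∑ j, Dd (eV n j) (Dd (eV n j) (Gm U)) (x, t))
        - ∑ j, ∑ k, (Dd (eV n j) (Dd (eV n k) (Gm U)) (x, t) * Hm U k j (x, t)
            + Hm U j k (x, t) * Dd (eV n k) (Dd (eV n j) (Gm U)) (x, t))) / 2 := by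
    rw [DF hU (tV n)]
    dsimp only
    have e1 : Dd (tV n) (Gm U) (x, t) = ∑ j, Dd (eV n j) (Dd (eV n j) (Gm U)) (x, t) := by
      rw [DG hU (tV n)]
      exact Finset.sum_congr rfl fun j _ => hτH j j x
    have e2 : (∑ j, ∑ k, (Dd (tV n) (Hm U j k) (x, t) * Hm U k j (x, t)
          + Hm U j k (x, t) * Dd (tV n) (Hm U k j) (x, t)))
        = ∑ j, ∑ k, (Dd (eV n j) (Dd (eV n k) (Gm U)) (x, t) * Hm U k j (x, t)
            + Hm U j k (x, t) * Dd (eV n k) (Dd (eV n j) (Gm U)) (x, t)) :=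
      Finset.sum_congr rfl fun j _ => Finset.sum_congr rfl fun k _ => by
        rw [hτH j k x, hτH k j x]
    rw [e1, e2]
  have eΔF : (∑ i, Dd (eV n i) (Dd (eV n i) (Fm U)) (x, t))
      = ∑ i, ((2 * (Dd (eV n i) (Gm U) (x, t) * Dd (eV n i) (Gm U) (x, t)
            + Gm U (x, t) * Dd (eV n i) (Dd (eV n i) (Gm U)) (x, t))
        - ∑ j, ∑ k,
          (Dd (eV n i) (Dd (eV n i) (Hm U j k)) (x, t) * Hm U k j (x, t)
            + Dd (eV n i) (Hm U j k) (x, t) * Dd (eV n i) (Hm U k j) (x, t)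
            + (Dd (eV n i) (Hm U j k) (x, t) * Dd (eV n i) (Hm U k j) (x, t)
              + Hm U j k (x, t) * Dd (eV n i) (Dd (eV n i) (Hm U k j)) (x, t)))) / 2) :=
    Finset.sum_congr rfl fun i _ => D2F hU (eV n i) (eV n i) (x, t)
  rw [hL1, hL2, eR1, eR2, eτF, eΔF]
  exact alg (Gm U (x, t))
    (fun i => Dd (eV n i) (Gm U) (x, t))
    (fun i => Dd (eV n i) (Dd (eV n i) (Gm U)) (x, t))
    (fun j k => Hm U j k (x, t))
    (fun j k => Dd (eV n j) (Dd (eV n k) (Gm U)) (x, t))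
    (fun i j k => Dd (eV n i) (Hm U j k) (x, t))
    (fun i j k => Dd (eV n i) (Dd (eV n i) (Hm U j k)) (x, t))
    (fun j k => lapH hU j k (x, t))
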